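/- In the constrained scalar regression game with bound W > 0, suppose the least squares coefficients have the same sign and are strictly ordered: 0 < w₁* < w₂* ≤ W. Then (a†, b†) ∈ [−W,W]² is a pure Nash equilibrium if and only if (a†, b†) = (w₁* − W, W); in particular the ensemble coefficient at equilibrium is a† + b† = w₁*, the least squares coefficient of smaller absolute value. -/
import Mathlib


/-- Scalar risk of environment `e` with variance weight `σ > 0` and least squares
coefficient `wstar` at joint actions `(a, b)`: `σ² ((a+b)² − 2 (a+b) wstar)`. -/
noncomputable def scalarRisk (σ wstar a b : ℝ) : ℝ :=
  σ ^ 2 * ((a + b) ^ 2 - 2 * (a + b) * wstar)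

/-- In the constrained scalar regression game with bound `W > 0`,
if the least squares coefficients satisfy `0 < w₁* < w₂* ≤ W`, then
`(a†, b†) ∈ [−W, W]²` is a pure Nash equilibrium iff `(a†, b†) = (w₁* − W, W)`;
in particular the ensemble coefficient at equilibrium is `w₁*`. -/
theorem scalar_game_same_signs (σ₁ σ₂ : ℝ) (hσ₁ : 0 < σ₁) (hσ₂ : 0 < σ₂)
    (w₁ w₂ : ℝ) (h₀ : 0 < w₁) (h₁₂ : w₁ < w₂) (W : ℝ) (hW : 0 < W) (h₂W : w₂ ≤ W)
    (a b : ℝ) (ha : a ∈ Set.Icc (-W) W) (hb : b ∈ Set.Icc (-W) W) :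
    ((∀ a' ∈ Set.Icc (-W) W, scalarRisk σ₁ w₁ a b ≤ scalarRisk σ₁ w₁ a' b) ∧
     (∀ b' ∈ Set.Icc (-W) W, scalarRisk σ₂ w₂ a b ≤ scalarRisk σ₂ w₂ a b')) ↔
    (a = w₁ - W ∧ b = W) := by
  obtain ⟨haL, haU⟩ := ha
  obtain ⟨hbL, hbU⟩ := hb
  constructor
  · rintro ⟨h1, h2⟩
    have key1 : ∀ a' ∈ Set.Icc (-W) W, (a + b - w₁) ^ 2 ≤ (a' + b - w₁) ^ 2 := by
      intro a' ha'
      have h := h1 a' ha'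
      simp only [scalarRisk] at h
      nlinarith [pow_pos hσ₁ 2]
    have key2 : ∀ b' ∈ Set.Icc (-W) W, (a + b - w₂) ^ 2 ≤ (a + b' - w₂) ^ 2 := by
      intro b' hb'
      have h := h2 b' hb'
      simp only [scalarRisk] at h
      nlinarith [pow_pos hσ₂ 2]
    by_cases hcase : w₂ ≤ a + W
    · exfalso
      have hmem : w₂ - a ∈ Set.Icc (-W) W := ⟨by linarith, by linarith⟩
      have h2' := key2 (w₂ - a) hmem
      have hs2 : a + b = w₂ := by nlinarith [sq_nonneg (a + b - w₂)]
      have hmem1 : w₁ - b ∈ Set.Icc (-W) W := ⟨by linarith, by nlinarith⟩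
      have h1' := key1 (w₁ - b) hmem1
      nlinarith [sq_nonneg (a + b - w₁)]
    · push_neg at hcase
      have hbW : b = W := by
        have h2' := key2 W ⟨by linarith, le_refl W⟩
        nlinarith
      have h1' := key1 (w₁ - W) ⟨by linarith, by linarith⟩
      refine ⟨?_, hbW⟩
      rw [hbW] at h1'
      nlinarith [sq_nonneg (a + W - w₁)]
  · rintro ⟨rfl, rfl⟩
    constructor
    · intro a' ⟨ha'L, ha'U⟩
      simp only [scalarRisk]
      nlinarith [sq_nonneg (a' + b - w₁), sq_nonneg σ₁]
    · intro b' ⟨hb'L, hb'U⟩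
      simp only [scalarRisk]
      nlinarith [sq_nonneg σ₂, mul_nonneg (by linarith : (0:ℝ) ≤ b - b') (by linarith : (0:ℝ) ≤ 2*w₂ - (w₁ - b + b') - w₁)]
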